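/- arXiv:2205.07072 — 7 statements merged into one kernel-verified Lean document; each statement's English description precedes it below -/
import Mathlib

section
/- Let P be a poset and X a coherent cutset of P. If σ ⊆ X is a non-empty finite astral subset of P, then there exists z ∈ st(σ) such that st(σ) ⊆ st(z). -/
/-- The star of an element: all elements comparable to `a`. -/
def starOf {α : Type*} [PartialOrder α] (a : α) : Set α := {x | x ≤ a ∨ a ≤ x}

/-- The star of a subset: elements comparable to every element of `A`. -/
def starSetOf {α : Type*} [PartialOrder α] (A : Set α) : Set α := ⋂ a ∈ A, starOf a

/-- A subset is astral if it is contained in the star of some element. -/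
def IsAstral {α : Type*} [PartialOrder α] (A : Set α) : Prop := ∃ x : α, A ⊆ starOf x

/-- One step of the comparability relation inside a subposet `S`. -/
def CompStep {α : Type*} [PartialOrder α] (S : Set α) (x y : α) : Prop :=
  x ∈ S ∧ y ∈ S ∧ (x ≤ y ∨ y ≤ x)

/-- `x` and `y` are connected inside the subposet `S`. -/
def ConnIn {α : Type*} [PartialOrder α] (S : Set α) (x y : α) : Prop :=
  Relation.ReflTransGen (CompStep S) x y

/-- A subposet is connected (as a subposet, via comparability). -/
def IsConnSub {α : Type*} [PartialOrder α] (S : Set α) : Prop :=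
  S.Nonempty ∧ ∀ x ∈ S, ∀ y ∈ S, ConnIn S x y

/-- The connected component of `x` in the subposet `S`. -/
def compOf {α : Type*} [PartialOrder α] (S : Set α) (x : α) : Set α :=
  {y | y ∈ S ∧ ConnIn S x y}

/-- `C` is a connected component of the subposet `S`. -/
def IsCompOf {α : Type*} [PartialOrder α] (S C : Set α) : Prop :=
  ∃ x ∈ S, C = compOf S x

/-- The crosscut poset `Γ(P,X)`: connected components of the nonempty `st(A)`, `∅ ≠ A ⊆ X`. -/
def crosscutPoset {α : Type*} [PartialOrder α] (X : Set α) : Set (Set α) :=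
  {C | ∃ A : Set α, A.Nonempty ∧ A ⊆ X ∧ IsCompOf (starSetOf A) C}

/-- The subposet `Γ_f(P,X)` coming from finite subsets `A ⊆ X`. -/
def crosscutPosetF {α : Type*} [PartialOrder α] (X : Set α) : Set (Set α) :=
  {C | ∃ A : Set α, A.Nonempty ∧ A.Finite ∧ A ⊆ X ∧ IsCompOf (starSetOf A) C}

/-- `X` is a cutset: every finite chain extends to a chain by an element of `X`. -/
def IsCutset {α : Type*} [PartialOrder α] (X : Set α) : Prop :=
  ∀ σ : Set α, σ.Finite → IsChain (· ≤ ·) σ → ∃ a ∈ X, IsChain (· ≤ ·) (insert a σ)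

/-- A subset `X` is coherent: every finite nonempty bounded subset of `X` has a meet or a join. -/
def IsCoherent {α : Type*} [PartialOrder α] (X : Set α) : Prop :=
  ∀ A ⊆ X, A.Finite → A.Nonempty → (BddAbove A ∨ BddBelow A) →
    (∃ z, IsGLB A z) ∨ (∃ z, IsLUB A z)

/-- The simplices of the crosscut complex `Γ_C(P,X)`: nonempty finite astral subsets of `X`. -/
def IsCCSimplex {α : Type*} [PartialOrder α] (X σ : Set α) : Prop :=
  σ ⊆ X ∧ σ.Finite ∧ σ.Nonempty ∧ IsAstral σ

/-- `I_X(D) = {x ∈ X | D ⊆ st(x)}`. -/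
def astralIdx {α : Type*} [PartialOrder α] (X D : Set α) : Set α :=
  {x ∈ X | D ⊆ starOf x}

/-- The set of maximal elements of a poset. -/
def mxlSet (α : Type*) [PartialOrder α] : Set α := {a | ∀ b, a ≤ b → b = a}

/-- The set of minimal elements of a poset. -/
def mnlSet (α : Type*) [PartialOrder α] : Set α := {a | ∀ b, b ≤ a → b = a}

/-- Type synonym carrying the Alexandroff topology (down-sets are open) of a preorder. -/
def AlexSp (β : Type*) := β

instance {β : Type*} [Preorder β] : Preorder (AlexSp β) := inferInstanceAs (Preorder β)
instance {β : Type*} [PartialOrder β] : PartialOrder (AlexSp β) :=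
  inferInstanceAs (PartialOrder β)

instance {β : Type*} [Preorder β] : TopologicalSpace (AlexSp β) where
  IsOpen U := IsLowerSet U
  isOpen_univ := isLowerSet_univ
  isOpen_inter _ _ h₁ h₂ := h₁.inter h₂
  isOpen_sUnion _ h := isLowerSet_sUnion h

lemma mem_starSetOf {α : Type*} [PartialOrder α] {A : Set α} {y : α} :
    y ∈ starSetOf A ↔ ∀ a ∈ A, y ≤ a ∨ a ≤ y := by
  simp [starSetOf, starOf]

lemma lub_works {α : Type*} [PartialOrder α] {σ : Set α} {z : α}
    (hz : IsLUB σ z) : z ∈ starSetOf σ ∧ starSetOf σ ⊆ starOf z := by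
  constructor
  · exact mem_starSetOf.2 fun a ha => Or.inr (hz.1 ha)
  · intro y hy
    rw [mem_starSetOf] at hy
    by_cases h : ∃ a ∈ σ, y ≤ a
    · obtain ⟨a, ha, hya⟩ := h
      exact Or.inl (hya.trans (hz.1 ha))
    · push_neg at h
      refine Or.inr (hz.2 fun a ha => ?_)
      rcases hy a ha with h1 | h1
      · exact absurd h1 (h a ha)
      · exact h1

lemma glb_works {α : Type*} [PartialOrder α] {σ : Set α} {z : α}
    (hz : IsGLB σ z) : z ∈ starSetOf σ ∧ starSetOf σ ⊆ starOf z := by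
  constructor
  · exact mem_starSetOf.2 fun a ha => Or.inl (hz.1 ha)
  · intro y hy
    rw [mem_starSetOf] at hy
    by_cases h : ∃ a ∈ σ, a ≤ y
    · obtain ⟨a, ha, hya⟩ := h
      exact Or.inr ((hz.1 ha).trans hya)
    · push_neg at h
      refine Or.inl (hz.2 fun a ha => ?_)
      rcases hy a ha with h1 | h1
      · exact h1
      · exact absurd h1 (h a ha)

lemma bdd_case {α : Type*} [PartialOrder α] {X σ : Set α}
    (hcoh : IsCoherent X) (hσX : σ ⊆ X) (hfin : σ.Finite) (hne : σ.Nonempty)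
    (hbdd : BddAbove σ ∨ BddBelow σ) :
    ∃ z ∈ starSetOf σ, starSetOf σ ⊆ starOf z := by
  rcases hcoh σ hσX hfin hne hbdd with ⟨z, hz⟩ | ⟨z, hz⟩
  · exact ⟨z, (glb_works hz).1, (glb_works hz).2⟩
  · exact ⟨z, (lub_works hz).1, (lub_works hz).2⟩

/-- Bjorner's lemma: for a coherent cutset `X` and a nonempty finite astral `σ ⊆ X`,
there is `z ∈ st(σ)` with `st(σ) ⊆ st(z)`. -/
theorem stmt_0 {α : Type*} [PartialOrder α] {X σ : Set α}
    (hcut : IsCutset X) (hcoh : IsCoherent X)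
    (hσX : σ ⊆ X) (hfin : σ.Finite) (hne : σ.Nonempty) (hast : IsAstral σ) :
    ∃ z ∈ starSetOf σ, starSetOf σ ⊆ starOf z := by
  obtain ⟨x, hx⟩ := hast
  set σm : Set α := {a ∈ σ | a ≤ x} with hσm
  set σp : Set α := {a ∈ σ | x ≤ a} with hσp
  have hsplit : ∀ a ∈ σ, a ∈ σm ∨ a ∈ σp := by
    intro a ha
    rcases hx ha with h | h
    · exact Or.inl ⟨ha, h⟩
    · exact Or.inr ⟨ha, h⟩
  by_cases hpm : σp.Nonempty
  · by_cases hmm : σm.Nonempty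
    · -- both nonempty; apply coherence to σm (bounded above by x)
      have hmX : σm ⊆ X := fun a ha => hσX ha.1
      have hmfin : σm.Finite := hfin.subset fun a ha => ha.1
      rcases hcoh σm hmX hmfin hmm (Or.inl ⟨x, fun a ha => ha.2⟩) with ⟨v, hv⟩ | ⟨v, hv⟩
      · -- GLB of σm: σ is bounded below by v
        obtain ⟨a0, ha0⟩ := hmm
        have hvx : v ≤ x := (hv.1 ha0).trans ha0.2
        refine bdd_case hcoh hσX hfin hne (Or.inr ⟨v, fun a ha => ?_⟩)
        rcases hsplit a ha with h | h
        · exact hv.1 h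
        · exact hvx.trans h.2
      · -- LUB v of σm works directly
        have hvx : v ≤ x := hv.2 fun a ha => ha.2
        refine ⟨v, mem_starSetOf.2 fun a ha => ?_, fun y hy => ?_⟩
        · rcases hsplit a ha with h | h
          · exact Or.inr (hv.1 h)
          · exact Or.inl (hvx.trans h.2)
        · rw [mem_starSetOf] at hy
          by_cases h : ∃ a ∈ σm, y ≤ a
          · obtain ⟨a, ha, hya⟩ := h
            exact Or.inl (hya.trans (hv.1 ha))
          · push_neg at h
            refine Or.inr (hv.2 fun a ha => ?_)
            rcases hy a ha.1 with h1 | h1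
            · exact absurd h1 (h a ha)
            · exact h1
    · -- σm empty: σ ⊆ σp, bounded below by x
      refine bdd_case hcoh hσX hfin hne (Or.inr ⟨x, fun a ha => ?_⟩)
      rcases hsplit a ha with h | h
      · exact absurd ⟨a, h⟩ hmm
      · exact h.2
  · -- σp empty: σ bounded above by x
    refine bdd_case hcoh hσX hfin hne (Or.inl ⟨x, fun a ha => ?_⟩)
    rcases hsplit a ha with h | h
    · exact h.2
    · exact absurd ⟨a, h⟩ hpm
end

section
/- Let P be a poset and X an antichain of P. Then the set of maximal elements of the crosscut poset Γ(P,X) equals {st(a) | a ∈ X}. -/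
lemma starSetOf_singleton {α : Type*} [PartialOrder α] (a : α) :
    starSetOf {a} = starOf a := by
  simp [starSetOf]

lemma self_mem_starOf {α : Type*} [PartialOrder α] (a : α) : a ∈ starOf a :=
  Or.inl le_rfl

lemma compOf_starOf {α : Type*} [PartialOrder α] (a : α) :
    compOf (starOf a) a = starOf a := by
  apply Set.eq_of_subset_of_subset
  · intro y hy; exact hy.1
  · intro y hy
    exact ⟨hy, Relation.ReflTransGen.single ⟨self_mem_starOf a, hy, hy.symm⟩⟩

lemma starOf_mem_crosscut {α : Type*} [PartialOrder α] {X : Set α} {a : α} (ha : a ∈ X) :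
    starOf a ∈ crosscutPoset X := by
  refine ⟨{a}, ⟨a, rfl⟩, by simpa using ha, a, ?_, ?_⟩
  · rw [starSetOf_singleton]; exact self_mem_starOf a
  · rw [starSetOf_singleton, compOf_starOf]

lemma crosscut_subset_star {α : Type*} [PartialOrder α] {X : Set α} {C : Set α}
    (hC : C ∈ crosscutPoset X) : ∃ a ∈ X, C ⊆ starOf a := by
  obtain ⟨A, ⟨a, haA⟩, hAX, x, hx, rfl⟩ := hC
  refine ⟨a, hAX haA, fun y hy => ?_⟩
  exact Set.mem_iInter₂.mp hy.1 a haA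

/-- If `X` is an antichain then the maximal elements of `Γ(P,X)` are exactly the `st(a)`, `a ∈ X`. -/
theorem stmt_1 {α : Type*} [PartialOrder α] {X : Set α} (hX : IsAntichain (· ≤ ·) X) :
    {C ∈ crosscutPoset X | ∀ C' ∈ crosscutPoset X, C ⊆ C' → C' = C} =
      (fun a => starOf a) '' X := by
  ext C
  constructor
  · rintro ⟨hC, hmax⟩
    obtain ⟨a, haX, hsub⟩ := crosscut_subset_star hC
    exact ⟨a, haX, (hmax _ (starOf_mem_crosscut haX) hsub)⟩
  · rintro ⟨a, haX, rfl⟩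
    refine ⟨starOf_mem_crosscut haX, fun C' hC' hsub => ?_⟩
    obtain ⟨b, hbX, hsub'⟩ := crosscut_subset_star hC'
    have hab : a ∈ starOf b := hsub' (hsub (self_mem_starOf a))
    have : a = b := by
      by_contra hne
      cases hab with
      | inl h => exact hX haX hbX hne h
      | inr h => exact hX hbX haX (Ne.symm hne) h
    subst this
    exact Set.Subset.antisymm hsub' hsub
end

section
/- Let P be a poset, X ⊆ P, and B a connected non-empty subposet of P. Let Γ_B = {C ∈ Γ(P,X) | B ⊆ C}. If Γ_B is non-empty, then I_X(B) = {x ∈ X | B ⊆ st(x)} is non-empty and Γ_B has a minimum element, namely the connected component of st(I_X(B)) containing B. -/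
/-!
If `C ∈ Γ(P,X)` is a component of `st(A)` containing `B`, then `B ⊆ st(A)` forces
`A ⊆ I_X(B)`, so `I_X(B)` is nonempty and `st(I_X(B)) ⊆ st(A)`. The connected set `B` lies in a
single component `C₀` of `st(I_X(B))`, and `C₀` is connected inside `st(A)` through `B`, hence
contained in `C`.
-/

section Crosscut

variable {α : Type*} [PartialOrder α]

lemma ConnIn.mono {S T : Set α} (hST : S ⊆ T) {x y : α} (h : ConnIn S x y) : ConnIn T x y :=
  Relation.ReflTransGen.mono (fun _ _ ⟨hx, hy, hxy⟩ => ⟨hST hx, hST hy, hxy⟩) x y h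

lemma compOf_subset (S : Set α) (x : α) : compOf S x ⊆ S :=
  fun _ hy => hy.1

lemma compOf_subset_compOf {S T : Set α} (hST : S ⊆ T) {x z : α} (hx : x ∈ compOf T z) :
    compOf S x ⊆ compOf T z :=
  fun _ ⟨hyS, hxy⟩ => ⟨hST hyS, hx.2.trans (hxy.mono hST)⟩

lemma IsConnSub.subset_compOf {B S : Set α} (hB : IsConnSub B) (hBS : B ⊆ S) {b : α}
    (hb : b ∈ B) : B ⊆ compOf S b :=
  fun _ hy => ⟨hBS hy, (hB.2 b hb _ hy).mono hBS⟩

lemma subset_starSetOf_iff {A D : Set α} : D ⊆ starSetOf A ↔ ∀ a ∈ A, D ⊆ starOf a := by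
  simp only [starSetOf, Set.subset_iInter_iff]

lemma starSetOf_anti {A A' : Set α} (h : A ⊆ A') : starSetOf A' ⊆ starSetOf A :=
  Set.biInter_subset_biInter_left h

lemma subset_starSetOf_astralIdx (X D : Set α) : D ⊆ starSetOf (astralIdx X D) :=
  subset_starSetOf_iff.mpr fun _ ha => ha.2

lemma subset_astralIdx_of_subset_compOf {X A B : Set α} (hAX : A ⊆ X) {x : α}
    (hB : B ⊆ compOf (starSetOf A) x) : A ⊆ astralIdx X B :=
  fun a ha => ⟨hAX ha, subset_starSetOf_iff.mp (hB.trans (compOf_subset _ _)) a ha⟩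

end Crosscut

/-- If a connected nonempty subposet `B` is contained in some element of `Γ(P,X)`, then
`I_X(B) ≠ ∅` and `Γ_B = {C ∈ Γ(P,X) | B ⊆ C}` has a minimum element, namely the connected
component of `st(I_X(B))` containing `B`. -/
theorem stmt_4 {α : Type*} [PartialOrder α] {X B : Set α}
    (hB : IsConnSub B) (hΓB : ∃ C ∈ crosscutPoset X, B ⊆ C) :
    (astralIdx X B).Nonempty ∧
      ∃ C₀, IsCompOf (starSetOf (astralIdx X B)) C₀ ∧ B ⊆ C₀ ∧
        C₀ ∈ crosscutPoset X ∧ ∀ C ∈ crosscutPoset X, B ⊆ C → C₀ ⊆ C := by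
  obtain ⟨_, ⟨A, hA, hAX, _, -, rfl⟩, hBC⟩ := hΓB
  have hI : (astralIdx X B).Nonempty := hA.mono (subset_astralIdx_of_subset_compOf hAX hBC)
  have hBI := subset_starSetOf_astralIdx X B
  obtain ⟨b, hb⟩ := hB.1
  refine ⟨hI, compOf _ b, ⟨b, hBI hb, rfl⟩, hB.subset_compOf hBI hb,
    ⟨_, hI, fun _ ha => ha.1, b, hBI hb, rfl⟩, ?_⟩
  rintro _ ⟨A', -, hA'X, _, -, rfl⟩ hBC'
  exact compOf_subset_compOf
    (starSetOf_anti (subset_astralIdx_of_subset_compOf hA'X hBC')) (hBC' hb)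
end

section
/- Let B be a non-empty set. Then the poset of finite non-empty subsets of B, ordered by inclusion, is weakly contractible (all homotopy groups of the associated Alexandroff space are trivial). Equivalently, every continuous map from a sphere S^n into this poset (with the Alexandroff topology where down-sets are open) is nullhomotopic. -/
lemma alexsp_continuous_of_monotone {β γ : Type*} [Preorder β] [Preorder γ]
    (φ : β → γ) (h : Monotone φ) : Continuous (show AlexSp β → AlexSp γ from φ) := by
  rw [continuous_def]
  intro U hU
  exact IsLowerSet.preimage hU h

lemma alexsp_homotopic_of_le {X : Type*} [TopologicalSpace X] {β : Type*} [Preorder β]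
    (f g : C(X, AlexSp β)) (h : ∀ x, f x ≤ g x) : f.Homotopic g := by
  refine ⟨{ toFun := fun p => if p.1 = 1 then g p.2 else f p.2
            continuous_toFun := ?_
            map_zero_left := ?_
            map_one_left := ?_ }⟩
  · rw [continuous_def]
    intro U hU
    have hU' : IsLowerSet U := hU
    have heq : (fun p : unitInterval × X => if p.1 = 1 then g p.2 else f p.2) ⁻¹' U
        = (Set.univ ×ˢ (g ⁻¹' U)) ∪ ({t : unitInterval | t ≠ 1} ×ˢ (f ⁻¹' U)) := by
      ext ⟨t, x⟩
      simp only [Set.mem_preimage, Set.mem_union, Set.mem_prod, Set.mem_univ, true_and,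
        Set.mem_setOf_eq]
      by_cases ht : t = 1
      · simp [ht]
      · rw [if_neg ht]
        constructor
        · exact fun hf => Or.inr ⟨ht, hf⟩
        · rintro (hg | ⟨-, hf⟩)
          · exact hU' (h x) hg
          · exact hf
    rw [heq]
    exact (isOpen_univ.prod (hU.preimage g.continuous)).union
      (isOpen_ne.prod (hU.preimage f.continuous))
  · intro x
    simp only [if_neg (show (0 : unitInterval) ≠ 1 from fun hh => by
      exact zero_ne_one (congrArg Subtype.val hh))]
  · intro x
    simp

/-- The poset of finite nonempty subsets of a nonempty set, with the Alexandroff topology,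
is weakly contractible: every continuous map from a sphere into it is nullhomotopic. -/
theorem stmt_6 (B : Type*) (hB : Nonempty B) :
    ∀ (n : ℕ)
      (f : C(Metric.sphere (0 : EuclideanSpace ℝ (Fin (n + 1))) 1,
        AlexSp {s : Set B // s.Finite ∧ s.Nonempty})),
      f.Nullhomotopic := by
  intro n f
  obtain ⟨a⟩ := hB
  let φ : {s : Set B // s.Finite ∧ s.Nonempty} → {s : Set B // s.Finite ∧ s.Nonempty} :=
    fun s => ⟨s.1 ∪ {a}, s.2.1.union (Set.finite_singleton a),
      s.2.2.mono Set.subset_union_left⟩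
  have hφ : Monotone φ := fun s t hst => Set.union_subset_union_left {a} hst
  let g : C(Metric.sphere (0 : EuclideanSpace ℝ (Fin (n + 1))) 1,
      AlexSp {s : Set B // s.Finite ∧ s.Nonempty}) :=
    ⟨fun x => φ (f x), (alexsp_continuous_of_monotone φ hφ).comp f.continuous⟩
  have h1 : f.Homotopic g :=
    alexsp_homotopic_of_le f g (fun x => Set.subset_union_left)
  let c : {s : Set B // s.Finite ∧ s.Nonempty} :=
    ⟨{a}, Set.finite_singleton a, Set.singleton_nonempty a⟩
  let k : C(Metric.sphere (0 : EuclideanSpace ℝ (Fin (n + 1))) 1,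
      AlexSp {s : Set B // s.Finite ∧ s.Nonempty}) :=
    ⟨fun _ => c, continuous_const⟩
  have h2 : k.Homotopic g :=
    alexsp_homotopic_of_le k g (fun x => Set.subset_union_right)
  exact ⟨c, h1.trans h2.symm⟩
end

section
/- Let P be a poset such that mxl(P) is a cutset and every C ∈ Γ(P, mxl(P)) has a maximum element. Then Γ(P, mxl(P)) is isomorphic as a poset to the subposet P₀ = {max C | C ∈ Γ(P, mxl(P))} of P, via C ↦ max C, with inverse z ↦ P_{≤z}. -/
lemma comp_eq_Iic' {α : Type*} [PartialOrder α] {C : Set α} {m : α}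
    (hC : C ∈ crosscutPoset (mxlSet α)) (hm : IsGreatest C m) :
    C = {x | x ≤ m} := by
  obtain ⟨A, hA, hAmx, x₀, hx₀, rfl⟩ := hC
  ext x
  constructor
  · exact fun hx => hm.2 hx
  · intro hx
    obtain ⟨hmS, hconn⟩ := hm.1
    have hxS : x ∈ starSetOf A := by
      simp only [starSetOf, Set.mem_iInter]
      intro a ha
      have hma : m ∈ starOf a := by
        have := hmS
        simp only [starSetOf, Set.mem_iInter] at this
        exact this a ha
      have hle : m ≤ a := by
        rcases hma with h | h
        · exact h
        · exact (hAmx ha m h).le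
      exact Or.inl (le_trans hx hle)
    exact ⟨hxS, hconn.tail ⟨hmS, hxS, Or.inr hx⟩⟩

/-- Under the hypotheses of Theorem `theo_every_C_has_maximum`, `Γ(P, mxl P)` is isomorphic
to the subposet `P₀ = {max C | C ∈ Γ(P, mxl P)}` via `C ↦ max C`, with inverse
`z ↦ P_{≤ z}`. -/
theorem stmt_12 {α : Type*} [PartialOrder α]
    (hmx : ∀ x : α, ∃ a ∈ mxlSet α, x ≤ a)
    (hmax : ∀ C ∈ crosscutPoset (mxlSet α), ∃ m, IsGreatest C m) :
    ∃ e : {C // C ∈ crosscutPoset (mxlSet α)} ≃o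
        {z : α // z ∈ {w | ∃ C ∈ crosscutPoset (mxlSet α), IsGreatest C w}},
      (∀ C : {C // C ∈ crosscutPoset (mxlSet α)}, IsGreatest C.1 (e C).1) ∧
        ∀ z, ((e.symm z).1 : Set α) = {x | x ≤ z.1} := by
  classical
  have key : ∀ C : {C // C ∈ crosscutPoset (mxlSet α)},
      IsGreatest C.1 ((hmax C.1 C.2).choose) := fun C => (hmax C.1 C.2).choose_spec
  refine ⟨{ toFun := fun C => ⟨(hmax C.1 C.2).choose, C.1, C.2, key C⟩
          , invFun := fun z => ⟨{x | x ≤ z.1}, ?_⟩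
          , left_inv := ?_
          , right_inv := ?_
          , map_rel_iff' := ?_ }, fun C => key C, fun z => rfl⟩
  · obtain ⟨C, hC, hg⟩ := z.2
    rw [← comp_eq_Iic' hC hg]
    exact hC
  · intro C
    apply Subtype.ext
    exact (comp_eq_Iic' C.2 (key C)).symm
  · intro z
    apply Subtype.ext
    obtain ⟨C, hC, hg⟩ := z.2
    have hg' : IsGreatest {x | x ≤ z.1} z.1 := ⟨le_refl _, fun x hx => hx⟩
    exact IsGreatest.unique (key ⟨{x | x ≤ z.1}, _⟩) hg'
  · intro C D
    constructor
    · intro h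
      have hC := comp_eq_Iic' C.2 (key C)
      have hD := comp_eq_Iic' D.2 (key D)
      show C.1 ⊆ D.1
      rw [hC, hD]
      intro x hx
      exact le_trans hx h
    · intro h
      exact (key D).2 (h ((key C).1))
end

section
/- Let K be a simplicial complex in which every simplex is contained in a maximal simplex. Let M be the set of maximal simplices of K and L_K the poset of non-empty intersections of sets of simplices from M, ordered by inclusion. Then K has the fixed simplex property (every simplicial self-map of K fixes some simplex setwise) if and only if L_K has the fixed point property for order-preserving self-maps. -/
/-- An abstract simplicial complex: a downward-closed family of nonempty finite vertex sets. -/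
structure AbsSimplicialComplex (V : Type*) where
  faces : Set (Finset V)
  nonempty_of_mem : ∀ σ ∈ faces, σ.Nonempty
  down_closed : ∀ σ ∈ faces, ∀ τ ⊆ σ, τ.Nonempty → τ ∈ faces

/-- The maximal simplices of an abstract simplicial complex. -/
def AbsSimplicialComplex.maxFaces {V : Type*} (K : AbsSimplicialComplex V) : Set (Finset V) :=
  {σ ∈ K.faces | ∀ τ ∈ K.faces, σ ⊆ τ → τ = σ}

/-- The poset `L_K` of nonempty intersections of sets of maximal simplices. -/
def AbsSimplicialComplex.interPoset {V : Type*} (K : AbsSimplicialComplex V) :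
    Set (Finset V) :=
  {σ | σ.Nonempty ∧ ∃ A : Set (Finset V), A ⊆ K.maxFaces ∧ A.Nonempty ∧
    (σ : Set V) = ⋂ s ∈ A, (s : Set V)}

namespace StmtAux14

variable {V : Type*} [DecidableEq V]

open scoped Classical in
/-- The least element of `L_K` above `σ`: intersection of all maximal faces containing `σ`. -/
noncomputable def cl (K : AbsSimplicialComplex V) (σ : Finset V) : Finset V :=
  if h : ∃ m ∈ K.maxFaces, σ ⊆ m then
    h.choose.filter (fun v => ∀ m ∈ K.maxFaces, σ ⊆ m → v ∈ m)
  else σ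

theorem mem_cl {K : AbsSimplicialComplex V} {σ : Finset V}
    (h : ∃ m ∈ K.maxFaces, σ ⊆ m) {v : V} :
    v ∈ cl K σ ↔ ∀ m ∈ K.maxFaces, σ ⊆ m → v ∈ m := by
  classical
  rw [cl, dif_pos h]
  simp only [Finset.mem_filter]
  constructor
  · exact fun hv => hv.2
  · exact fun hv => ⟨hv _ h.choose_spec.1 h.choose_spec.2, hv⟩

theorem subset_cl {K : AbsSimplicialComplex V} {σ : Finset V}
    (h : ∃ m ∈ K.maxFaces, σ ⊆ m) : σ ⊆ cl K σ := by
  intro v hv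
  exact (mem_cl h).2 fun m _ hσm => hσm hv

theorem cl_mono {K : AbsSimplicialComplex V} {σ σ' : Finset V}
    (hss : σ ⊆ σ') (h' : ∃ m ∈ K.maxFaces, σ' ⊆ m) : cl K σ ⊆ cl K σ' := by
  obtain ⟨m', hm', hσ'm'⟩ := h'
  have h : ∃ m ∈ K.maxFaces, σ ⊆ m := ⟨m', hm', hss.trans hσ'm'⟩
  intro v hv
  exact (mem_cl ⟨m', hm', hσ'm'⟩).2 fun m hm hsub => (mem_cl h).1 hv m hm (hss.trans hsub)

theorem cl_mem_interPoset {K : AbsSimplicialComplex V} {σ : Finset V}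
    (hne : σ.Nonempty) (h : ∃ m ∈ K.maxFaces, σ ⊆ m) : cl K σ ∈ K.interPoset := by
  refine ⟨hne.mono (subset_cl h), {m | m ∈ K.maxFaces ∧ σ ⊆ m}, fun m hm => hm.1,
    ⟨h.choose, h.choose_spec.1, h.choose_spec.2⟩, ?_⟩
  ext v
  simp only [Finset.coe_sort_coe, Finset.mem_coe, Set.mem_iInter, Set.mem_setOf_eq]
  rw [mem_cl h]
  constructor
  · exact fun hv m hm => hv m hm.1 hm.2
  · exact fun hv m hm hsub => hv m ⟨hm, hsub⟩

theorem interPoset_subset_faces {K : AbsSimplicialComplex V} {x : Finset V}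
    (hx : x ∈ K.interPoset) : x ∈ K.faces := by
  obtain ⟨hne, A, hAM, ⟨m, hm⟩, hEq⟩ := hx
  have hxm : x ⊆ m := by
    intro v hv
    have : (v : V) ∈ (⋂ s ∈ A, (s : Set V)) := hEq ▸ hv
    exact Set.mem_iInter₂.1 this m hm
  exact K.down_closed m (hAM hm).1 x hxm hne

theorem cl_of_mem {K : AbsSimplicialComplex V} {x : Finset V}
    (hx : x ∈ K.interPoset) : cl K x = x := by
  obtain ⟨hne, A, hAM, ⟨m₀, hm₀⟩, hEq⟩ := hx
  have hsub : ∀ m ∈ A, x ⊆ m := by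
    intro m hm v hv
    have : (v : V) ∈ (⋂ s ∈ A, (s : Set V)) := hEq ▸ hv
    exact Set.mem_iInter₂.1 this m hm
  have h : ∃ m ∈ K.maxFaces, x ⊆ m := ⟨m₀, hAM hm₀, hsub m₀ hm₀⟩
  apply Finset.Subset.antisymm _ (subset_cl h)
  intro v hv
  have hv' : ∀ m ∈ K.maxFaces, x ⊆ m → v ∈ m := (mem_cl h).1 hv
  have : (v : V) ∈ (⋂ s ∈ A, (s : Set V)) :=
    Set.mem_iInter₂.2 fun m hm => hv' m (hAM hm) (hsub m hm)
  rw [← hEq] at this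
  exact this

theorem maxFaces_subset_interPoset {K : AbsSimplicialComplex V} {m : Finset V}
    (hm : m ∈ K.maxFaces) : m ∈ K.interPoset := by
  refine ⟨K.nonempty_of_mem m hm.1, {m}, by simpa using hm, Set.singleton_nonempty m, by simp⟩

end StmtAux14
open StmtAux14 in
/-- If every simplex of `K` is contained in a maximal simplex, then `K` has the fixed
simplex property iff the poset `L_K` has the fixed point property. -/
theorem stmt_14 {V : Type*} [DecidableEq V] (K : AbsSimplicialComplex V)
    (hK : ∀ σ ∈ K.faces, ∃ m ∈ K.maxFaces, σ ⊆ m) :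
    (∀ f : V → V, (∀ σ ∈ K.faces, σ.image f ∈ K.faces) →
        ∃ σ ∈ K.faces, σ.image f = σ) ↔
      (∀ g : {σ // σ ∈ K.interPoset} → {σ // σ ∈ K.interPoset},
        Monotone g → ∃ σ, g σ = σ) := by
  have hclP : ∀ σ ∈ K.faces, cl K σ ∈ K.interPoset := fun σ h =>
    cl_mem_interPoset (K.nonempty_of_mem σ h) (hK σ h)
  constructor
  · -- FSP → FPP(L_K)
    intro hL g hg
    classical
    have le_iff : ∀ a b : {σ // σ ∈ K.interPoset}, a ≤ b ↔ a.1 ⊆ b.1 := fun a b => by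
      rw [← Subtype.coe_le_coe, Finset.le_iff_subset]
    by_contra hno
    push_neg at hno
    -- a default vertex
    obtain ⟨σ₀, hσ₀f, -⟩ := hL id (by intro σ h; simpa using h)
    obtain ⟨d, hd⟩ := K.nonempty_of_mem σ₀ hσ₀f
    -- choice of vertex in elements of L_K
    have chP : ∀ x : {σ // σ ∈ K.interPoset}, ∃ v, v ∈ x.1 := fun x => x.2.1
    set ch : {σ // σ ∈ K.interPoset} → V := fun x => (chP x).choose with hchdef
    have ch_mem : ∀ x, ch x ∈ x.1 := fun x => (chP x).choose_spec
    -- vertices are faces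
    have hvf : ∀ {σ : Finset V}, σ ∈ K.faces → ∀ {v : V}, v ∈ σ → {v} ∈ K.faces := by
      intro σ hσ v hv
      exact K.down_closed σ hσ {v} (Finset.singleton_subset_iff.2 hv) ⟨v, Finset.mem_singleton_self v⟩
    -- first auxiliary simplicial map
    set f₀ : V → V := fun v =>
      if h : {v} ∈ K.faces then ch (g ⟨cl K {v}, hclP _ h⟩) else d with hf₀def
    have hf₀ : ∀ σ ∈ K.faces, σ.image f₀ ∈ K.faces := by
      intro σ hσ
      obtain ⟨m, hmM, hσm⟩ := hK σ hσ
      have hmP : m ∈ K.interPoset := maxFaces_subset_interPoset hmM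
      have himg : σ.image f₀ ⊆ (g ⟨m, hmP⟩).1 := by
        intro w hw
        obtain ⟨v, hv, rfl⟩ := Finset.mem_image.1 hw
        have hvface : {v} ∈ K.faces := hvf hσ hv
        have h1 : (⟨cl K {v}, hclP _ hvface⟩ : {σ // σ ∈ K.interPoset}) ≤ ⟨m, hmP⟩ := by
          refine (le_iff _ _).2 ?_
          have : cl K {v} ⊆ cl K m :=
            cl_mono (Finset.singleton_subset_iff.2 (hσm hv)) ⟨m, hmM, Finset.Subset.refl m⟩
          rwa [cl_of_mem hmP] at this
        have h2 := (le_iff _ _).1 (hg h1)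
        show f₀ v ∈ (g ⟨m, hmP⟩).1
        rw [hf₀def]
        simp only [dif_pos hvface]
        exact h2 (ch_mem _)
      exact K.down_closed _ (interPoset_subset_faces (g ⟨m, hmP⟩).2) _ himg
        ((K.nonempty_of_mem σ hσ).image f₀)
    obtain ⟨σ₁, hσ₁f, hfix₁⟩ := hL f₀ hf₀
    -- τ ≤ g τ
    set τ : {σ // σ ∈ K.interPoset} := ⟨cl K σ₁, hclP _ hσ₁f⟩ with hτdef
    have hτ : τ ≤ g τ := by
      have step1 : σ₁ ⊆ (g τ).1 := by
        intro w hw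
        rw [← hfix₁] at hw
        obtain ⟨v, hv, rfl⟩ := Finset.mem_image.1 hw
        have hvface : {v} ∈ K.faces := hvf hσ₁f hv
        have h1 : (⟨cl K {v}, hclP _ hvface⟩ : {σ // σ ∈ K.interPoset}) ≤ τ := by
          refine (le_iff _ _).2 ?_
          exact cl_mono (Finset.singleton_subset_iff.2 hv) (hK σ₁ hσ₁f)
        have h2 := (le_iff _ _).1 (hg h1)
        show f₀ v ∈ (g τ).1
        rw [hf₀def]
        simp only [dif_pos hvface]
        exact h2 (ch_mem _)
      refine (le_iff _ _).2 ?_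
      show cl K σ₁ ⊆ (g τ).1
      have := cl_mono step1 (hK _ (interPoset_subset_faces (g τ).2))
      rwa [cl_of_mem (g τ).2] at this
    -- the strictly increasing chain
    set x : ℕ → {σ // σ ∈ K.interPoset} := fun n => g^[n] τ with hxdef
    have hx_succ : ∀ n, x (n + 1) = g (x n) := fun n => Function.iterate_succ_apply' g n τ
    have hxle : ∀ n, x n ≤ x (n + 1) := by
      intro n
      induction n with
      | zero => simpa [hxdef] using hτ
      | succ n ih => rw [hx_succ, hx_succ]; exact hg ih
    have hxmono : Monotone x := monotone_nat_of_le_succ hxle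
    have hxss : ∀ n, (x n).1 ⊂ (x (n + 1)).1 := by
      intro n
      refine (((le_iff _ _).1 (hxle n)).ssubset_of_ne ?_)
      intro h
      exact hno (x n) (by rw [← hx_succ]; exact Subtype.ext h.symm)
    have hw : ∀ n, ∃ v, v ∈ (x (n + 1)).1 ∧ v ∉ (x n).1 := by
      intro n
      obtain ⟨v, hv1, hv2⟩ := Finset.exists_of_ssubset (hxss n)
      exact ⟨v, hv1, hv2⟩
    set w : ℕ → V := fun n => (hw n).choose with hwdef
    have hw1 : ∀ n, w n ∈ (x (n + 1)).1 := fun n => (hw n).choose_spec.1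
    have hw2 : ∀ n, w n ∉ (x n).1 := fun n => (hw n).choose_spec.2
    have hchain : ∀ {k l : ℕ}, k ≤ l → (x k).1 ⊆ (x l).1 := by
      intro k l hkl
      exact (le_iff _ _).1 (hxmono hkl)
    -- the killer simplicial map
    set j : V → ℕ := fun v => if h : ∃ n, v ∈ (x n).1 then Nat.find h else 0 with hjdef
    set f : V → V := fun v => w (j v) with hfdef
    have hfs : ∀ σ ∈ K.faces, σ.image f ∈ K.faces := by
      intro σ hσ
      set N : ℕ := σ.sup j with hNdef
      have himg : σ.image f ⊆ (x (N + 1)).1 := by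
        intro u hu
        obtain ⟨v, hv, rfl⟩ := Finset.mem_image.1 hu
        have : j v + 1 ≤ N + 1 := Nat.succ_le_succ (Finset.le_sup hv)
        exact hchain this (hw1 (j v))
      exact K.down_closed _ (interPoset_subset_faces (x (N + 1)).2) _ himg
        ((K.nonempty_of_mem σ hσ).image f)
    obtain ⟨σ₂, hσ₂f, hfix₂⟩ := hL f hfs
    -- derive the contradiction
    have hmem : ∀ u ∈ σ₂, ∃ n, u ∈ (x n).1 := by
      intro u hu
      rw [← hfix₂] at hu
      obtain ⟨v, hv, rfl⟩ := Finset.mem_image.1 hu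
      exact ⟨j v + 1, hw1 (j v)⟩
    have hQ : ∃ n, ∃ u ∈ σ₂, u ∈ (x n).1 := by
      obtain ⟨u, hu⟩ := K.nonempty_of_mem σ₂ hσ₂f
      obtain ⟨n, hn⟩ := hmem u hu
      exact ⟨n, u, hu, hn⟩
    set n₀ : ℕ := Nat.find hQ with hn₀def
    obtain ⟨u₀, hu₀σ, hu₀x⟩ := Nat.find_spec hQ
    rw [← hfix₂] at hu₀σ
    obtain ⟨v, hvσ, hveq⟩ := Finset.mem_image.1 hu₀σ
    have hvex : ∃ n, v ∈ (x n).1 := hmem v hvσ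
    have hjv : j v = Nat.find hvex := by rw [hjdef]; exact dif_pos hvex
    have hvx : v ∈ (x (j v)).1 := by rw [hjv]; exact Nat.find_spec hvex
    have hle : n₀ ≤ j v := Nat.find_min' hQ ⟨v, hvσ, hvx⟩
    have : f v ∉ (x n₀).1 := fun h => hw2 (j v) (hchain hle h)
    rw [hveq] at this
    exact this hu₀x
  · -- FPP(L_K) → FSP
    intro hR f hf
    -- the map g = cl ∘ image f on L_K
    set g : {σ // σ ∈ K.interPoset} → {σ // σ ∈ K.interPoset} := fun x =>
      ⟨cl K (x.1.image f), hclP _ (hf _ (interPoset_subset_faces x.2))⟩ with hgdef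
    have hg : Monotone g := by
      intro x y hxy
      show cl K (x.1.image f) ≤ cl K (y.1.image f)
      rw [Finset.le_iff_subset]
      exact cl_mono (Finset.image_subset_image hxy) (hK _ (hf _ (interPoset_subset_faces y.2)))
    obtain ⟨x, hx⟩ := hR g hg
    have hx' : cl K (x.1.image f) = x.1 := congrArg Subtype.val hx
    have hfx : x.1.image f ⊆ x.1 := by
      have h := subset_cl (hK _ (hf _ (interPoset_subset_faces x.2)))
      rwa [hx'] at h
    -- iterate image f
    set s : ℕ → Finset V := fun n => (fun t => t.image f)^[n] x.1 with hsdef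
    have hs_succ : ∀ n, s (n + 1) = (s n).image f := fun n =>
      Function.iterate_succ_apply' _ n _
    have hface : ∀ n, s n ∈ K.faces := by
      intro n
      induction n with
      | zero => exact interPoset_subset_faces x.2
      | succ n ih => rw [hs_succ]; exact hf _ ih
    have hsub : ∀ n, s (n + 1) ⊆ s n := by
      intro n
      induction n with
      | zero => rw [hs_succ]; exact hfx
      | succ n ih =>
          calc s (n + 2) = (s (n + 1)).image f := hs_succ _
            _ ⊆ (s n).image f := Finset.image_subset_image ih
            _ = s (n + 1) := (hs_succ n).symm
    have key : ∃ n, s (n + 1) = s n := by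
      by_contra hne
      push_neg at hne
      have hcard : ∀ n, (s n).card + n ≤ (s 0).card := by
        intro n
        induction n with
        | zero => simp
        | succ n ih =>
            have hss : s (n + 1) ⊂ s n := (hsub n).ssubset_of_ne (hne n)
            have := Finset.card_lt_card hss
            omega
      have hpos : 0 < (s ((s 0).card)).card :=
        Finset.card_pos.2 (K.nonempty_of_mem _ (hface _))
      have := hcard (s 0).card
      omega
    obtain ⟨n, hn⟩ := key
    exact ⟨s n, hface n, by rw [← hs_succ]; exact hn⟩
end

section
/- Let P be a finite poset such that mnl(P) is a coherent cutset of P. Then every C ∈ Γ(P, mnl(P)) has a minimum element, Γ(P, mnl(P)) = {st(A) | A ⊆ mnl(P) non-empty, st(A) ≠ ∅}, and the set {min C | C ∈ Γ(P, mnl(P))} equals the subposet P_M of P consisting of all elements obtainable as joins of non-empty subsets of mnl(P). -/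
lemma starSetOf_eq_upperBounds {α : Type*} [PartialOrder α] {A : Set α}
    (hA : A ⊆ mnlSet α) : starSetOf A = upperBounds A := by
  ext x
  constructor
  · intro hx a ha
    have hx' : x ∈ starOf a := by
      have := Set.mem_iInter.1 hx a
      exact Set.mem_iInter.1 this ha
    rcases hx' with h | h
    · exact (hA ha x h).ge
    · exact h
  · intro hx
    refine Set.mem_iInter.2 fun a => Set.mem_iInter.2 fun ha => Or.inr (hx ha)

lemma exists_lub {α : Type*} [PartialOrder α] [Fintype α]
    (hcoh : IsCoherent (mnlSet α)) {A : Set α} (hA : A ⊆ mnlSet α)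
    (hne : A.Nonempty) (hbdd : (upperBounds A).Nonempty) : ∃ z, IsLUB A z := by
  rcases hcoh A hA A.toFinite hne (Or.inl hbdd) with ⟨z, hz⟩ | h
  · refine ⟨z, ?_, fun w hw => ?_⟩
    · intro a ha
      have : z = a := hA ha z (hz.1 ha)
      exact this.ge
    · obtain ⟨a, ha⟩ := hne
      have : z = a := hA ha z (hz.1 ha)
      exact this ▸ hw ha
  · exact h

lemma compOf_Ici {α : Type*} [PartialOrder α] {z x : α} (hx : x ∈ Set.Ici z) :
    compOf (Set.Ici z) x = Set.Ici z := by
  ext y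
  constructor
  · exact fun hy => hy.1
  · intro hy
    refine ⟨hy, Relation.ReflTransGen.head ⟨hx, le_refl z, Or.inr hx⟩
      (Relation.ReflTransGen.single ⟨le_refl z, hy, Or.inl hy⟩)⟩

/-- For any element `C` of the crosscut poset, there is `A` nonempty `⊆ mnl` with
`IsLUB A z` and `C = Ici z`. -/
lemma crosscut_struct {α : Type*} [PartialOrder α] [Fintype α]
    (hcoh : IsCoherent (mnlSet α)) {C : Set α} (hC : C ∈ crosscutPoset (mnlSet α)) :
    ∃ A : Set α, A.Nonempty ∧ A ⊆ mnlSet α ∧ ∃ z, IsLUB A z ∧ C = Set.Ici z ∧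
      starSetOf A = Set.Ici z := by
  obtain ⟨A, hne, hA, x, hx, hCeq⟩ := hC
  rw [starSetOf_eq_upperBounds hA] at hx hCeq
  obtain ⟨z, hz⟩ := exists_lub hcoh hA hne ⟨x, hx⟩
  have hub : upperBounds A = Set.Ici z := hz.upperBounds_eq
  rw [hub] at hx hCeq
  exact ⟨A, hne, hA, z, hz, by rw [hCeq, compOf_Ici hx],
    by rw [starSetOf_eq_upperBounds hA, hub]⟩

/-- For a finite poset `P` whose minimal elements form a coherent cutset: every element of
`Γ(P, mnl P)` has a minimum, `Γ(P, mnl P)` consists exactly of the nonempty `st(A)` for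
nonempty `A ⊆ mnl P`, and `{min C | C ∈ Γ(P, mnl P)}` equals the set `P_M` of joins of
nonempty subsets of `mnl P`. -/
theorem stmt_16 {α : Type*} [PartialOrder α] [Fintype α]
    (hcut : IsCutset (mnlSet α)) (hcoh : IsCoherent (mnlSet α)) :
    (∀ C ∈ crosscutPoset (mnlSet α), ∃ z, IsLeast C z) ∧
      crosscutPoset (mnlSet α) =
        {S | ∃ A : Set α, A ⊆ mnlSet α ∧ A.Nonempty ∧ S = starSetOf A ∧ S.Nonempty} ∧
      {z | ∃ C ∈ crosscutPoset (mnlSet α), IsLeast C z} =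
        {z | ∃ A : Set α, A ⊆ mnlSet α ∧ A.Nonempty ∧ IsLUB A z} := by
  refine ⟨?_, ?_, ?_⟩
  · intro C hC
    obtain ⟨A, _, _, z, _, hCeq, _⟩ := crosscut_struct hcoh hC
    exact ⟨z, by rw [hCeq]; exact ⟨le_refl z, fun y hy => hy⟩⟩
  · ext C
    constructor
    · intro hC
      obtain ⟨A, hne, hA, z, _, hCeq, hst⟩ := crosscut_struct hcoh hC
      exact ⟨A, hA, hne, by rw [hCeq, hst], by rw [hCeq]; exact ⟨z, le_refl z⟩⟩
    · rintro ⟨A, hA, hne, rfl, x, hx⟩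
      have hst : starSetOf A = upperBounds A := starSetOf_eq_upperBounds hA
      obtain ⟨z, hz⟩ := exists_lub hcoh hA hne ⟨x, hst ▸ hx⟩
      have hub : starSetOf A = Set.Ici z := by rw [hst, hz.upperBounds_eq]
      refine ⟨A, hne, hA, x, hx, ?_⟩
      rw [hub, compOf_Ici (hub ▸ hx)]
  · ext z
    constructor
    · rintro ⟨C, hC, hz⟩
      obtain ⟨A, hne, hA, z', hz', hCeq, _⟩ := crosscut_struct hcoh hC
      have : z = z' := hz.unique (by rw [hCeq]; exact ⟨le_refl z', fun y hy => hy⟩)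
      exact ⟨A, hA, hne, this ▸ hz'⟩
    · rintro ⟨A, hA, hne, hz⟩
      have hub : starSetOf A = Set.Ici z := by
        rw [starSetOf_eq_upperBounds hA, hz.upperBounds_eq]
      refine ⟨starSetOf A, ⟨A, hne, hA, z, hub ▸ Set.self_mem_Ici, ?_⟩,
        by rw [hub]; exact ⟨le_refl z, fun y hy => hy⟩⟩
      rw [hub, compOf_Ici Set.self_mem_Ici]
end
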